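/- arXiv:1508.07490 — 3 statements merged into one kernel-verified Lean document; each statement's English description precedes it below -/
import Mathlib

section
/- If r is an irrational real number, then r and -r have common tails. -/
/-- The sequence of complete quotients of the continued fraction expansion of `x`:
`cfTerm x 0 = x` and `cfTerm x (n+1) = 1 / (cfTerm x n - ⌊cfTerm x n⌋)`. -/
noncomputable def cfTerm (x : ℝ) : ℕ → ℝ
  | 0 => x
  | n + 1 => (cfTerm x n - ⌊cfTerm x n⌋)⁻¹

/-- The `n`-th partial quotient (digit) of the simple continued fraction expansion
`[x₀; x₁, x₂, …]` of `x`. -/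
noncomputable def cfDigit (x : ℝ) (n : ℕ) : ℤ := ⌊cfTerm x n⌋

/-- Two real numbers have *common tails* if their continued fraction expansions
eventually agree: there exist `m n` with `s_{m+k} = t_{n+k}` for all `k ≥ 0`. -/
def CommonTails (s t : ℝ) : Prop :=
  ∃ m n : ℕ, ∀ k : ℕ, cfDigit s (m + k) = cfDigit t (n + k)

private lemma cfTerm_shift (s t : ℝ) (m n : ℕ) (h : cfTerm s m = cfTerm t n) :
    ∀ k, cfTerm s (m + k) = cfTerm t (n + k) := by
  intro k
  induction k with
  | zero => simpa using h
  | succ k ih =>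
    have h2 : cfTerm s (m + k + 1) = cfTerm t (n + k + 1) := by
      simp only [cfTerm, ih]
    simpa [Nat.add_assoc] using h2

private lemma cfTerm_succ_of_sub_one (s t : ℝ) (m n : ℕ)
    (h : cfTerm s m = cfTerm t n - 1) :
    cfTerm s (m + 1) = cfTerm t (n + 1) := by
  have h1 : Int.fract (cfTerm s m) = Int.fract (cfTerm t n) := by
    rw [h]
    exact_mod_cast Int.fract_sub_intCast (cfTerm t n) 1
  show (cfTerm s m - ⌊cfTerm s m⌋)⁻¹ = (cfTerm t n - ⌊cfTerm t n⌋)⁻¹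
  rw [Int.self_sub_floor, Int.self_sub_floor, h1]

/-- If `r` is irrational, then `r` and `-r` have common tails. -/
theorem roots_common_tails_stmt_1 (r : ℝ) (hr : Irrational r) :
    CommonTails r (-r) := by
  set f := Int.fract r with hfdef
  have hf0 : 0 < f := Int.fract_pos.mpr (by exact_mod_cast hr.ne_int ⌊r⌋)
  have hf1 : f < 1 := Int.fract_lt_one r
  have hfirr : Irrational f := by
    rw [hfdef, ← Int.self_sub_floor]
    exact hr.sub_intCast ⌊r⌋
  have hfne : f ≠ 1 / 2 := by
    intro h
    exact hfirr ⟨1 / 2, by rw [h]; norm_num⟩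
  have h1f0 : 0 < 1 - f := by linarith
  have hT1 : cfTerm r 1 = f⁻¹ := by
    show (cfTerm r 0 - ⌊cfTerm r 0⌋)⁻¹ = f⁻¹
    rw [show cfTerm r 0 = r from rfl, Int.self_sub_floor]
  have hN1 : cfTerm (-r) 1 = (1 - f)⁻¹ := by
    show (cfTerm (-r) 0 - ⌊cfTerm (-r) 0⌋)⁻¹ = (1 - f)⁻¹
    rw [show cfTerm (-r) 0 = -r from rfl, Int.self_sub_floor,
      Int.fract_neg (ne_of_gt hf0)]
  rcases lt_or_gt_of_ne hfne with hlt | hgt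
  · -- f < 1/2 : cfTerm (-r) 2 = cfTerm r 1 - 1, so tails match at (r, 2) ~ (-r, 3)
    have hfloor : (⌊(1 - f)⁻¹⌋ : ℤ) = 1 := by
      rw [Int.floor_eq_iff]
      constructor
      · push_cast
        rw [le_inv_comm₀ one_pos h1f0]
        · linarith
      · push_cast
        have h2 : (1 - f)⁻¹ < 2 := by
          rw [inv_lt_comm₀ h1f0 two_pos]; linarith
        linarith
    have hN2 : cfTerm (-r) 2 = cfTerm r 1 - 1 := by
      show (cfTerm (-r) 1 - ⌊cfTerm (-r) 1⌋)⁻¹ = cfTerm r 1 - 1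
      rw [hN1, hfloor, hT1]
      push_cast
      field_simp
      simp [hf0.ne']
    have key : cfTerm (-r) 3 = cfTerm r 2 :=
      cfTerm_succ_of_sub_one (-r) r 2 1 hN2
    refine ⟨2, 3, fun k => ?_⟩
    have := cfTerm_shift (-r) r 3 2 key k
    unfold cfDigit
    rw [this]
  · -- f > 1/2 : cfTerm r 2 = cfTerm (-r) 1 - 1, so tails match at (r, 3) ~ (-r, 2)
    have hfloor : (⌊f⁻¹⌋ : ℤ) = 1 := by
      rw [Int.floor_eq_iff]
      constructor
      · push_cast
        rw [le_inv_comm₀ one_pos hf0]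
        · linarith
      · push_cast
        have h2 : f⁻¹ < 2 := by
          rw [inv_lt_comm₀ hf0 two_pos]; linarith
        linarith
    have hT2 : cfTerm r 2 = cfTerm (-r) 1 - 1 := by
      show (cfTerm r 1 - ⌊cfTerm r 1⌋)⁻¹ = cfTerm (-r) 1 - 1
      rw [hT1, hfloor, hN1]
      push_cast
      field_simp
      ring
    have key : cfTerm r 3 = cfTerm (-r) 2 :=
      cfTerm_succ_of_sub_one r (-r) 2 1 hT2
    refine ⟨3, 2, fun k => ?_⟩
    have := cfTerm_shift r (-r) 3 2 key k
    unfold cfDigit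
    rw [this]
end

section
/- For any irrational real numbers s and u, s and u have common tails if and only if u can be obtained from s by applying a finite composition of basic operations, i.e., maps of the form y ↦ y + n (n ∈ ℤ), y ↦ -y, and y ↦ 1/y. -/
/-- A single basic operation: `y = x + n` for some integer `n`, `y = -x`, or `y = 1/x`. -/
def BasicOp (x y : ℝ) : Prop :=
  (∃ n : ℤ, y = x + n) ∨ y = -x ∨ y = 1 / x

lemma cfTerm_zero (x : ℝ) : cfTerm x 0 = x := rfl

lemma cfTerm_succ (x : ℝ) (n : ℕ) :
    cfTerm x (n + 1) = (Int.fract (cfTerm x n))⁻¹ := rfl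

lemma irrational_cfTerm {x : ℝ} (hx : Irrational x) (n : ℕ) : Irrational (cfTerm x n) := by
  induction n with
  | zero => exact hx
  | succ n ih =>
    rw [cfTerm_succ]
    exact ((ih.sub_intCast _).inv)

lemma fract_pos {y : ℝ} (hy : Irrational y) : 0 < Int.fract y := by
  rcases lt_or_eq_of_le (Int.fract_nonneg y) with h | h
  · exact h
  · exact absurd h.symm (by rw [Int.fract]; exact (hy.sub_intCast _).ne_zero)

lemma one_lt_cfTerm {x : ℝ} (hx : Irrational x) (n : ℕ) : 1 < cfTerm x (n + 1) := by
  rw [cfTerm_succ]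
  have h1 := fract_pos (irrational_cfTerm hx n)
  have h2 := Int.fract_lt_one (cfTerm x n)
  rw [lt_inv_comm₀ one_pos h1]
  simpa using h2

lemma one_le_cfDigit {x : ℝ} (hx : Irrational x) (n : ℕ) : 1 ≤ cfDigit x (n + 1) := by
  have := one_lt_cfTerm hx n
  rw [cfDigit]
  exact Int.le_floor.2 (by exact_mod_cast this.le)

lemma cfTerm_shift_s3 (x : ℝ) (m k : ℕ) : cfTerm (cfTerm x m) k = cfTerm x (m + k) := by
  induction k with
  | zero => rfl
  | succ k ih => rw [cfTerm_succ, ih, ← cfTerm_succ, Nat.add_assoc]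

lemma cfDigit_shift (x : ℝ) (m k : ℕ) : cfDigit (cfTerm x m) k = cfDigit x (m + k) := by
  rw [cfDigit, cfDigit, cfTerm_shift_s3]

lemma cfTerm_congr {s t : ℝ} {m n : ℕ} (h : cfTerm s m = cfTerm t n) (k : ℕ) :
    cfTerm s (m + k) = cfTerm t (n + k) := by
  rw [← cfTerm_shift_s3, ← cfTerm_shift_s3, h]

lemma commonTails_of_term_eq {s t : ℝ} {m n : ℕ} (h : cfTerm s m = cfTerm t n) :
    CommonTails s t := by
  exact ⟨m, n, fun k => by rw [cfDigit, cfDigit, cfTerm_congr h]⟩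

lemma commonTails_refl (s : ℝ) : CommonTails s s := ⟨0, 0, fun _ => rfl⟩

lemma commonTails_symm {s t : ℝ} (h : CommonTails s t) : CommonTails t s := by
  obtain ⟨m, n, h⟩ := h; exact ⟨n, m, fun k => (h k).symm⟩

lemma commonTails_trans {s t u : ℝ} (h1 : CommonTails s t) (h2 : CommonTails t u) :
    CommonTails s u := by
  obtain ⟨m, n, h1⟩ := h1
  obtain ⟨n', p, h2⟩ := h2
  refine ⟨m + (max n n' - n), p + (max n n' - n'), fun k => ?_⟩
  have e1 : m + (max n n' - n) + k = m + ((max n n' - n) + k) := by omega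
  have e2 : n + ((max n n' - n) + k) = n' + ((max n n' - n') + k) := by omega
  have e3 : p + (max n n' - n') + k = p + ((max n n' - n') + k) := by omega
  rw [e1, h1, e2, h2, e3]
lemma key_arith (A B C D : ℝ) (hA : 1 < A) (hB : 1 < B) (hC : 1 < C) (hD : 1 < D)
    (h1 : 2 < A * C) (h2 : 2 < B * D) (hAB : A - B = C⁻¹ - D⁻¹) :
    |A⁻¹ - B⁻¹| ≤ |C - D| / 4 := by
  have hA0 : (0:ℝ) < A := by linarith
  have hB0 : (0:ℝ) < B := by linarith
  have hC0 : (0:ℝ) < C := by linarith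
  have hD0 : (0:ℝ) < D := by linarith
  have key : A⁻¹ - B⁻¹ = (C - D) / (A * B * C * D) := by
    field_simp
    field_simp at hAB
    linear_combination (-1) * hAB
  rw [key, abs_div, abs_of_pos (by positivity : (0:ℝ) < A * B * C * D)]
  have h4 : (4:ℝ) < A * B * C * D := by nlinarith
  gcongr

lemma fract_eq_inv_cfTerm_one (x : ℝ) : Int.fract x = (cfTerm x 1)⁻¹ := by
  rw [cfTerm_succ, inv_inv, cfTerm_zero]

lemma fract_cfTerm (x : ℝ) (n : ℕ) : Int.fract (cfTerm x n) = (cfTerm x (n + 1))⁻¹ := by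
  rw [fract_eq_inv_cfTerm_one, cfTerm_shift_s3]

lemma det_aux : ∀ n : ℕ, ∀ x y : ℝ, Irrational x → Irrational y →
    (∀ k, cfDigit x k = cfDigit y k) → |x - y| ≤ (1/4 : ℝ) ^ n := by
  intro n
  induction n with
  | zero =>
    intro x y hx hy h
    have h0 : (⌊x⌋ : ℝ) = (⌊y⌋ : ℝ) := by exact_mod_cast h 0
    have hx1 := Int.fract_nonneg x
    have hx2 := Int.fract_lt_one x
    have hy1 := Int.fract_nonneg y
    have hy2 := Int.fract_lt_one y
    have ex : x = ⌊x⌋ + Int.fract x := by rw [Int.fract]; ring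
    have ey : y = ⌊y⌋ + Int.fract y := by rw [Int.fract]; ring
    rw [abs_le]
    constructor <;> [skip; skip] <;> nlinarith [ex, ey]
  | succ n ih =>
    intro x y hx hy h
    set A := cfTerm x 1 with hAdef
    set B := cfTerm y 1 with hBdef
    set C := cfTerm x 2 with hCdef
    set D := cfTerm y 2 with hDdef
    have hA : 1 < A := one_lt_cfTerm hx 0
    have hB : 1 < B := one_lt_cfTerm hy 0
    have hC : 1 < C := one_lt_cfTerm hx 1
    have hD : 1 < D := one_lt_cfTerm hy 1
    have hC0 : (0:ℝ) < C := by linarith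
    have hD0 : (0:ℝ) < D := by linarith
    have hfA : A - ⌊A⌋ = C⁻¹ := by
      have := fract_cfTerm x 1
      rw [Int.fract] at this; exact this
    have hfB : B - ⌊B⌋ = D⁻¹ := by
      have := fract_cfTerm y 1
      rw [Int.fract] at this; exact this
    have hdA : 1 ≤ (⌊A⌋ : ℝ) := by exact_mod_cast one_le_cfDigit hx 0
    have hdB : 1 ≤ (⌊B⌋ : ℝ) := by exact_mod_cast one_le_cfDigit hy 0
    have h1 : 2 < A * C := by
      have hCinv : C⁻¹ * C = 1 := inv_mul_cancel₀ (by linarith)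
      nlinarith
    have h2 : 2 < B * D := by
      have hDinv : D⁻¹ * D = 1 := inv_mul_cancel₀ (by linarith)
      nlinarith
    have hd1 : (⌊A⌋ : ℝ) = (⌊B⌋ : ℝ) := by exact_mod_cast h 1
    have hAB : A - B = C⁻¹ - D⁻¹ := by
      rw [← hfA, ← hfB, hd1]; ring
    -- x - y = A⁻¹ - B⁻¹
    have hfx : x - (⌊x⌋:ℝ) = A⁻¹ := by
      have := fract_eq_inv_cfTerm_one x
      rw [Int.fract] at this; exact this
    have hfy : y - (⌊y⌋:ℝ) = B⁻¹ := by
      have := fract_eq_inv_cfTerm_one y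
      rw [Int.fract] at this; exact this
    have hd0 : (⌊x⌋ : ℝ) = (⌊y⌋ : ℝ) := by exact_mod_cast h 0
    have hxy : x - y = A⁻¹ - B⁻¹ := by
      rw [← hfx, ← hfy, hd0]; ring
    have hCD : |C - D| ≤ (1/4:ℝ)^n := by
      apply ih C D (irrational_cfTerm hx 2) (irrational_cfTerm hy 2)
      intro k
      rw [hCdef, hDdef, cfDigit_shift, cfDigit_shift]
      exact h (2 + k)
    calc |x - y| = |A⁻¹ - B⁻¹| := by rw [hxy]
      _ ≤ |C - D| / 4 := key_arith A B C D hA hB hC hD h1 h2 hAB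
      _ ≤ (1/4:ℝ)^n / 4 := by linarith
      _ = (1/4:ℝ)^(n+1) := by ring

lemma cf_determines {x y : ℝ} (hx : Irrational x) (hy : Irrational y)
    (h : ∀ k, cfDigit x k = cfDigit y k) : x = y := by
  by_contra hne
  have hpos : 0 < |x - y| := abs_pos.2 (sub_ne_zero.2 hne)
  obtain ⟨n, hn⟩ := exists_pow_lt_of_lt_one hpos (by norm_num : (1/4:ℝ) < 1)
  exact absurd (det_aux n x y hx hy h) (by linarith)

lemma rtg_to_cfTerm {x : ℝ} (m : ℕ) : Relation.ReflTransGen BasicOp x (cfTerm x m) := by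
  induction m with
  | zero => exact Relation.ReflTransGen.refl
  | succ m ih =>
    have s1 : BasicOp (cfTerm x m) (cfTerm x m - ⌊cfTerm x m⌋) :=
      Or.inl ⟨-⌊cfTerm x m⌋, by push_cast; ring⟩
    have s2 : BasicOp (cfTerm x m - ⌊cfTerm x m⌋) (cfTerm x (m+1)) :=
      Or.inr (Or.inr (by rw [cfTerm_succ, one_div]; rfl))
    exact (ih.tail s1).tail s2

lemma rtg_from_cfTerm {x : ℝ} (hx : Irrational x) (m : ℕ) :
    Relation.ReflTransGen BasicOp (cfTerm x m) x := by
  induction m with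
  | zero => exact Relation.ReflTransGen.refl
  | succ m ih =>
    have hf : Int.fract (cfTerm x m) ≠ 0 := by
      rw [Int.fract]; exact ((irrational_cfTerm hx m).sub_intCast _).ne_zero
    have s1 : BasicOp (cfTerm x (m+1)) (cfTerm x m - ⌊cfTerm x m⌋) :=
      Or.inr (Or.inr (by rw [cfTerm_succ, one_div, inv_inv]; rfl))
    have s2 : BasicOp (cfTerm x m - ⌊cfTerm x m⌋) (cfTerm x m) :=
      Or.inl ⟨⌊cfTerm x m⌋, by ring⟩
    exact ((Relation.ReflTransGen.refl.tail s1).tail s2).trans ih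

lemma ct_add (x : ℝ) (n : ℤ) : CommonTails x (x + n) := by
  apply commonTails_of_term_eq (m := 1) (n := 1)
  rw [cfTerm_succ, cfTerm_succ, cfTerm_zero, cfTerm_zero, Int.fract_add_intCast]

lemma fract_ne_half {x : ℝ} (hx : Irrational x) : Int.fract x ≠ 1/2 := by
  intro h
  have h2 : x - (⌊x⌋:ℝ) = 1/2 := h
  have h3 : Irrational (1/2 : ℝ) := h2 ▸ hx.sub_intCast ⌊x⌋
  rw [show (1/2:ℝ) = ((1/2:ℚ):ℝ) by norm_num] at h3
  exact Rat.not_irrational _ h3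

lemma ct_neg (x : ℝ) (hx : Irrational x) : CommonTails x (-x) := by
  set f := Int.fract x with hfdef
  have hf0 : 0 < f := fract_pos hx
  have hf1 : f < 1 := Int.fract_lt_one x
  have hfne : f ≠ 0 := ne_of_gt hf0
  have hfrac_neg : Int.fract (-x) = 1 - f := Int.fract_neg hfne
  have h1f0 : (0:ℝ) < 1 - f := by linarith
  have hT1 : cfTerm (-x) 1 = (1 - f)⁻¹ := by
    rw [show cfTerm (-x) 1 = (Int.fract (-x))⁻¹ from rfl, hfrac_neg]
  have hx1 : cfTerm x 1 = f⁻¹ := rfl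
  rcases lt_or_gt_of_ne (fract_ne_half hx) with hlt | hgt
  · -- f < 1/2 : cfTerm x 2 = cfTerm (-x) 3
    apply commonTails_of_term_eq (m := 2) (n := 3)
    have hfloor1 : ⌊cfTerm (-x) 1⌋ = 1 := by
      rw [hT1]
      apply Int.floor_eq_iff.2
      constructor
      · push_cast
        rw [le_inv_comm₀ one_pos h1f0]; simpa using (by linarith : 1 - f ≤ 1)
      · push_cast
        rw [inv_lt_comm₀ h1f0 (by norm_num : (0:ℝ) < 1 + 1)]
        linarith
    have h1fne : (1:ℝ) - f ≠ 0 := ne_of_gt h1f0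
    have hT2 : cfTerm (-x) 2 = f⁻¹ - 1 := by
      have e2 : cfTerm (-x) 2 = (cfTerm (-x) 1 - ⌊cfTerm (-x) 1⌋)⁻¹ := rfl
      rw [e2, hfloor1, hT1]
      rw [show ((1:ℤ):ℝ) = 1 by norm_num]
      rw [show (1-f)⁻¹ - 1 = f * (1-f)⁻¹ by field_simp; ring]
      rw [mul_inv, inv_inv]
      field_simp
    have hfloor2 : ⌊cfTerm (-x) 2⌋ = ⌊cfTerm x 1⌋ - 1 := by
      rw [hT2, hx1, show f⁻¹ - 1 = f⁻¹ + ((-1:ℤ):ℝ) by push_cast; ring,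
        Int.floor_add_intCast]
      ring
    have e3 : cfTerm (-x) 3 = (cfTerm (-x) 2 - ⌊cfTerm (-x) 2⌋)⁻¹ := rfl
    have e2 : cfTerm x 2 = (cfTerm x 1 - ⌊cfTerm x 1⌋)⁻¹ := rfl
    rw [e2, e3, hfloor2, hT2, hx1]
    push_cast
    ring_nf
  · -- f > 1/2 : cfTerm x 3 = cfTerm (-x) 2
    apply commonTails_of_term_eq (m := 3) (n := 2)
    have hfloorx1 : ⌊cfTerm x 1⌋ = 1 := by
      rw [hx1]
      apply Int.floor_eq_iff.2
      constructor
      · push_cast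
        rw [le_inv_comm₀ one_pos hf0]; simpa using hf1.le
      · push_cast
        rw [inv_lt_comm₀ hf0 (by norm_num : (0:ℝ) < 1 + 1)]
        linarith
    have hx2 : cfTerm x 2 = (f⁻¹ - 1)⁻¹ := by
      have e2 : cfTerm x 2 = (cfTerm x 1 - ⌊cfTerm x 1⌋)⁻¹ := rfl
      rw [e2, hfloorx1, hx1]
      norm_num
    have hT1' : cfTerm (-x) 1 = cfTerm x 2 + 1 := by
      rw [hT1, hx2]
      field_simp
      ring
    have hfloorT1 : ⌊cfTerm (-x) 1⌋ = ⌊cfTerm x 2⌋ + 1 := by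
      rw [hT1', show cfTerm x 2 + 1 = cfTerm x 2 + (1:ℤ) by push_cast; ring,
        Int.floor_add_intCast]
    have e3 : cfTerm x 3 = (cfTerm x 2 - ⌊cfTerm x 2⌋)⁻¹ := rfl
    have e2 : cfTerm (-x) 2 = (cfTerm (-x) 1 - ⌊cfTerm (-x) 1⌋)⁻¹ := rfl
    rw [e3, e2, hfloorT1, hT1']
    push_cast
    ring_nf

lemma ct_inv_pos (x : ℝ) (hx : Irrational x) (hpos : 0 < x) : CommonTails x x⁻¹ := by
  have hne1 : x ≠ 1 := fun h => (h ▸ hx).ne_int 1 (by norm_num)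
  rcases lt_or_gt_of_ne hne1 with hlt | hgt
  · -- 0 < x < 1 : cfTerm x 1 = x⁻¹
    apply commonTails_of_term_eq (m := 1) (n := 0)
    have hfl : ⌊x⌋ = 0 := Int.floor_eq_iff.2 (by constructor <;> push_cast <;> linarith)
    rw [cfTerm_succ, cfTerm_zero, cfTerm_zero, Int.fract, hfl]
    norm_num
  · -- x > 1 : cfTerm (x⁻¹) 1 = x
    apply commonTails_symm
    apply commonTails_of_term_eq (m := 1) (n := 0)
    have hinv0 : 0 < x⁻¹ := by positivity
    have hinv1 : x⁻¹ < 1 := inv_lt_one_of_one_lt₀ hgt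
    have hfl : ⌊x⁻¹⌋ = 0 := Int.floor_eq_iff.2 (by constructor <;> push_cast <;> linarith)
    rw [cfTerm_succ, cfTerm_zero, cfTerm_zero, Int.fract, hfl]
    norm_num

lemma ct_inv (x : ℝ) (hx : Irrational x) : CommonTails x x⁻¹ := by
  rcases lt_or_gt_of_ne hx.ne_zero with hneg | hpos
  · have h1 : CommonTails x (-x) := ct_neg x hx
    have h2 : CommonTails (-x) (-x)⁻¹ := ct_inv_pos (-x) hx.neg (by linarith)
    have h3 : CommonTails x⁻¹ (-x⁻¹) := ct_neg x⁻¹ hx.inv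
    rw [show (-x)⁻¹ = -x⁻¹ by rw [inv_neg]] at h2
    exact commonTails_trans (commonTails_trans h1 h2) (commonTails_symm h3)
  · exact ct_inv_pos x hx hpos

lemma basicOp_preserves {b c : ℝ} (hb : Irrational b) (h : BasicOp b c) :
    Irrational c ∧ CommonTails b c := by
  rcases h with ⟨n, rfl⟩ | rfl | rfl
  · exact ⟨hb.add_intCast n, ct_add b n⟩
  · exact ⟨hb.neg, ct_neg b hb⟩
  · rw [one_div]
    exact ⟨hb.inv, ct_inv b hb⟩

/-- Two irrational numbers have common tails iff one can be obtained from the other by a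
finite composition of basic operations. -/
theorem roots_common_tails_stmt_3 (s u : ℝ) (hs : Irrational s) (hu : Irrational u) :
    CommonTails s u ↔ Relation.ReflTransGen BasicOp s u := by
  constructor
  · rintro ⟨m, n, h⟩
    have heq : cfTerm s m = cfTerm u n := by
      apply cf_determines (irrational_cfTerm hs m) (irrational_cfTerm hu n)
      intro k
      rw [cfDigit_shift, cfDigit_shift]
      exact h k
    exact (rtg_to_cfTerm m).trans (heq ▸ rtg_from_cfTerm hu n)
  · intro h
    clear hu
    have key : Irrational u ∧ CommonTails s u := by
      induction h with
      | refl => exact ⟨hs, commonTails_refl s⟩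
      | tail h1 hop ih =>
        obtain ⟨hb, hct⟩ := ih
        obtain ⟨hc, hbc⟩ := basicOp_preserves hb hop
        exact ⟨hc, commonTails_trans hct hbc⟩
    exact key.2
end

section
/- Let r be a real root of an irreducible cubic polynomial over ℚ. Then every irrational element of ℚ(r) has common tails with exactly one element of the set {μr + ν : μ, ν ∈ ℚ, 0 < μ, 0 ≤ ν < 1}; i.e., this set is a complete set of representatives of the common-tails equivalence classes of irrational elements of ℚ(r). -/
namespace CFAux

lemma cfTerm_zero (x : ℝ) : cfTerm x 0 = x := rfl

lemma cfTerm_succ (x : ℝ) (n : ℕ) : cfTerm x (n+1) = (cfTerm x n - ⌊cfTerm x n⌋)⁻¹ := rfl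

lemma cfTerm_shift (x : ℝ) (m : ℕ) : ∀ k, cfTerm x (m + k) = cfTerm (cfTerm x m) k
  | 0 => rfl
  | (k+1) => by
    show cfTerm x ((m+k)+1) = cfTerm (cfTerm x m) (k+1)
    rw [cfTerm_succ, cfTerm_succ, cfTerm_shift x m k]

lemma cfDigit_shift (x : ℝ) (m k : ℕ) : cfDigit x (m + k) = cfDigit (cfTerm x m) k := by
  unfold cfDigit; rw [cfTerm_shift]

lemma irrational_cfTerm {x : ℝ} (hx : Irrational x) : ∀ n, Irrational (cfTerm x n)
  | 0 => hx
  | (n+1) => by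
    have h := irrational_cfTerm hx n
    have h2 : Irrational (cfTerm x n - (⌊cfTerm x n⌋ : ℝ)) := h.sub_intCast _
    simpa [cfTerm_succ] using h2.inv

lemma fract_pos {x : ℝ} (hx : Irrational x) : 0 < x - ⌊x⌋ := by
  have h1 : x ≠ (⌊x⌋ : ℝ) := hx.ne_int _
  have h2 := Int.floor_le x
  cases' lt_or_eq_of_le h2 with h h
  · linarith
  · exact absurd h.symm h1

lemma fract_lt_one (x : ℝ) : x - ⌊x⌋ < 1 := by linarith [Int.lt_floor_add_one x]

lemma one_lt_cfTerm {x : ℝ} (hx : Irrational x) (n : ℕ) : 1 < cfTerm x (n+1) := by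
  have h := irrational_cfTerm hx n
  rw [cfTerm_succ]
  exact one_lt_inv_iff₀.mpr ⟨fract_pos h, fract_lt_one _⟩

lemma one_le_cfDigit {x : ℝ} (hx : Irrational x) (n : ℕ) : 1 ≤ cfDigit x (n+1) := by
  have h := one_lt_cfTerm hx n
  exact Int.le_floor.mpr (by exact_mod_cast h.le)

lemma ct_refl (x : ℝ) : CommonTails x x := ⟨0, 0, fun _ => rfl⟩

lemma ct_symm {x y : ℝ} (h : CommonTails x y) : CommonTails y x := by
  obtain ⟨m, n, h⟩ := h; exact ⟨n, m, fun k => (h k).symm⟩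

lemma ct_trans {x y z : ℝ} (h1 : CommonTails x y) (h2 : CommonTails y z) : CommonTails x z := by
  obtain ⟨m, n, h1⟩ := h1
  obtain ⟨n', p, h2⟩ := h2
  rcases le_total n n' with hle | hle
  · refine ⟨m + (n' - n), p, fun k => ?_⟩
    have e1 : m + (n' - n) + k = m + ((n' - n) + k) := by omega
    have e2 : n + ((n' - n) + k) = n' + k := by omega
    rw [e1, h1, e2, h2]
  · refine ⟨m, p + (n - n'), fun k => ?_⟩
    have e1 : m + k = m + k := rfl
    have e2 : n + k = n' + ((n - n') + k) := by omega
    have e3 : p + ((n - n') + k) = p + (n - n') + k := by omega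
    rw [h1, e2, h2, e3]

lemma ct_cfTerm (x : ℝ) (m : ℕ) : CommonTails x (cfTerm x m) :=
  ⟨m, 0, fun k => by rw [cfDigit_shift x m k, Nat.zero_add]⟩

lemma ct_add_int (x : ℝ) (n : ℤ) : CommonTails x (x + n) := by
  have h1 : cfTerm x 1 = cfTerm (x + n) 1 := by
    show (x - (⌊x⌋ : ℝ))⁻¹ = ((x + (n:ℝ)) - (⌊x + (n:ℝ)⌋ : ℝ))⁻¹
    rw [Int.floor_add_intCast]
    push_cast
    ring_nf
  refine ⟨1, 1, fun k => ?_⟩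
  rw [cfDigit_shift x 1 k, cfDigit_shift (x + n) 1 k, h1]

lemma ct_inv01 {x : ℝ} (h0 : 0 < x) (h1 : x < 1) : CommonTails x x⁻¹ := by
  have hfloor : ⌊x⌋ = 0 := Int.floor_eq_zero_iff.mpr ⟨h0.le, h1⟩
  have h : cfTerm x 1 = x⁻¹ := by
    show (x - (⌊x⌋ : ℝ))⁻¹ = x⁻¹
    rw [hfloor]; norm_num
  exact ⟨1, 0, fun k => by rw [cfDigit_shift x 1 k, h, Nat.zero_add]⟩

lemma ct_inv_pos {x : ℝ} (hx : Irrational x) (h0 : 0 < x) : CommonTails x x⁻¹ := by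
  rcases lt_trichotomy x 1 with h | h | h
  · exact ct_inv01 h0 h
  · exact absurd hx (by rw [h]; rintro hh; exact hh ⟨1, by norm_num⟩)
  · have h0' : 0 < x⁻¹ := inv_pos.mpr h0
    have h1' : x⁻¹ < 1 := inv_lt_one_of_one_lt₀ h
    have := ct_inv01 h0' h1'
    rw [inv_inv] at this
    exact ct_symm this

lemma ct_neg {x : ℝ} (hx : Irrational x) : CommonTails x (-x) := by
  set w : ℝ := x - (⌊x⌋ : ℝ) with hw
  have hwirr : Irrational w := hx.sub_intCast _
  have hw0 : 0 < w := fract_pos hx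
  have hw1 : w < 1 := fract_lt_one x
  have c1 : CommonTails x w := by
    have := ct_add_int x (-⌊x⌋)
    have e : x + ((-⌊x⌋ : ℤ) : ℝ) = w := by push_cast; rw [hw]; ring
    rwa [e] at this
  have c2 : CommonTails (-x) (1 - w) := by
    have := ct_add_int (-x) (⌊x⌋ + 1)
    have e : -x + (((⌊x⌋ : ℤ) + 1 : ℤ) : ℝ) = 1 - w := by push_cast; rw [hw]; ring
    rwa [e] at this
  have hz1 : 1 < w⁻¹ := one_lt_inv_iff₀.mpr ⟨hw0, hw1⟩
  have hzirr : Irrational w⁻¹ := hwirr.inv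
  have d1 : CommonTails w w⁻¹ := ct_inv01 hw0 hw1
  have h1w : Irrational (1 - w) := by
    have : Irrational (-w + ((1:ℚ):ℝ)) := (hwirr.neg).add_ratCast 1
    simpa [sub_eq_neg_add] using this
  have d2 : CommonTails (1 - w) (1 - w)⁻¹ := ct_inv01 (by linarith) (by linarith)
  have hz1irr : Irrational (w⁻¹ - 1) := by simpa using hzirr.sub_intCast 1
  have d3 : CommonTails (w⁻¹ - 1) (w⁻¹ - 1)⁻¹ := ct_inv_pos hz1irr (by linarith)
  have d4 : CommonTails (w⁻¹ - 1) w⁻¹ := by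
    have := ct_add_int (w⁻¹ - 1) 1
    have e : w⁻¹ - 1 + ((1 : ℤ) : ℝ) = w⁻¹ := by push_cast; ring
    rwa [e] at this
  have d5 : CommonTails ((w⁻¹ - 1)⁻¹) ((w⁻¹ - 1)⁻¹ + 1) := by
    have := ct_add_int ((w⁻¹ - 1)⁻¹) 1
    have e : (w⁻¹ - 1)⁻¹ + ((1 : ℤ) : ℝ) = (w⁻¹ - 1)⁻¹ + 1 := by push_cast; ring
    rwa [e] at this
  have key : (1 - w)⁻¹ = (w⁻¹ - 1)⁻¹ + 1 := by
    have hwne : w ≠ 0 := ne_of_gt hw0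
    have h1wne : 1 - w ≠ 0 := by intro h; simp [sub_eq_zero] at h; rw [← h] at hw1; linarith
    have hz1ne : w⁻¹ - 1 ≠ 0 := by intro h; rw [sub_eq_zero] at h; rw [← h] at hz1; linarith
    field_simp; ring
  -- -x ≈ 1-w ≈ (1-w)⁻¹ = (w⁻¹-1)⁻¹ + 1 ≈ (w⁻¹-1)⁻¹ ≈ w⁻¹-1 ≈ w⁻¹ ≈ w ≈ x
  have e1 : CommonTails (-x) ((w⁻¹ - 1)⁻¹) := by
    refine ct_trans c2 (ct_trans d2 ?_)
    rw [key]
    exact ct_symm d5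
  have e2 : CommonTails (-x) w := by
    refine ct_trans e1 (ct_trans (ct_symm d3) (ct_trans d4 (ct_symm d1)))
  exact ct_symm (ct_trans e2 (ct_symm c1))

lemma ct_inv {x : ℝ} (hx : Irrational x) : CommonTails x x⁻¹ := by
  rcases lt_trichotomy x 0 with h | h | h
  · have h1 : CommonTails x (-x) := ct_neg hx
    have h2 : CommonTails (-x) (-x)⁻¹ := ct_inv_pos hx.neg (by linarith)
    have h3 : CommonTails ((-x)⁻¹) (-(-x)⁻¹) := ct_neg (hx.neg.inv)
    have e : -(-x)⁻¹ = x⁻¹ := by rw [inv_neg]; ring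
    rw [e] at h3
    exact ct_trans h1 (ct_trans h2 h3)
  · exact absurd hx (by rw [h]; rintro hh; exact hh ⟨0, by norm_num⟩)
  · exact ct_inv_pos hx h

lemma linear_ne_zero {x : ℝ} (hx : Irrational x) (c d : ℤ) (h : ¬(c = 0 ∧ d = 0)) :
    (c : ℝ) * x + d ≠ 0 := by
  intro he
  rcases eq_or_ne c 0 with hc | hc
  · subst hc
    simp at he
    exact h ⟨rfl, by exact_mod_cast he⟩
  · have hcr : (c : ℝ) ≠ 0 := Int.cast_ne_zero.mpr hc
    apply hx
    refine ⟨(-d : ℚ) / (c : ℚ), ?_⟩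
    push_cast
    field_simp
    linarith

lemma mobius_irrational {x : ℝ} (hx : Irrational x) {a b c d : ℤ}
    (hdet : a * d - b * c = 1 ∨ a * d - b * c = -1) :
    Irrational (((a : ℝ) * x + b) / ((c : ℝ) * x + d)) := by
  have hdet' : a * d - b * c ≠ 0 := by rcases hdet with h | h <;> omega
  have hcd : ¬(c = 0 ∧ d = 0) := by rintro ⟨rfl, rfl⟩; simp at hdet'
  have hden := linear_ne_zero hx c d hcd
  rintro ⟨ρ, hρ⟩
  have h2 : (ρ : ℝ) * ((c : ℝ) * x + d) = (a : ℝ) * x + b := by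
    rw [hρ]; exact div_mul_cancel₀ _ hden
  rcases eq_or_ne ((a : ℝ) - ρ * c) 0 with h3 | h3
  · have hb : (b : ℝ) = ρ * d := by linear_combination -h2 - x * h3
    have hz : ((a * d - b * c : ℤ) : ℝ) = 0 := by
      push_cast
      linear_combination (d : ℝ) * h3 - (c : ℝ) * hb
    exact hdet' (by exact_mod_cast hz)
  · apply hx
    refine ⟨(ρ * d - b) / (a - ρ * c), ?_⟩
    have h3' : ((a : ℚ) - ρ * c) ≠ 0 := by
      intro hq
      apply h3
      have : (((a : ℚ) - ρ * c : ℚ) : ℝ) = 0 := by rw [hq]; norm_num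
      push_cast at this
      linarith
    push_cast
    rw [div_eq_iff (by push_cast at h3 ⊢; exact h3)]
    linear_combination h2

lemma ct_mobius_c0 (a b d : ℤ)
    (hdet : a * d - b * 0 = 1 ∨ a * d - b * 0 = -1) (x : ℝ) (hx : Irrational x) :
    CommonTails x (((a : ℝ) * x + b) / (((0:ℤ) : ℝ) * x + d)) := by
    simp only [mul_zero, sub_zero] at hdet
    have hconv : ∀ (u v : ℤ), u = 1 ∧ v = 1 ∨ u = -1 ∧ v = -1 → u * v = 1 := by
      rintro u v (⟨rfl, rfl⟩ | ⟨rfl, rfl⟩) <;> norm_num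
    rcases hdet with h | h
    · rcases Int.mul_eq_one_iff_eq_one_or_neg_one.mp h with ⟨rfl, rfl⟩ | ⟨rfl, rfl⟩
      · have := ct_add_int x b
        have e : ((1:ℤ):ℝ) * x + (b:ℝ) = x + b := by push_cast; ring
        rw [show ((0:ℤ):ℝ) * x + ((1:ℤ):ℝ) = 1 by push_cast; ring, div_one, e]
        exact this
      · have := ct_add_int x (-b)
        have e : (((-1:ℤ)):ℝ) * x + (b:ℝ) = -(x + ((-b : ℤ):ℝ)) := by push_cast; ring
        rw [show ((0:ℤ):ℝ) * x + ((-1:ℤ):ℝ) = -1 by push_cast; ring, div_neg, div_one, e, neg_neg]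
        exact this
    · have h' : a * (-d) = 1 := by linear_combination -h
      rcases Int.mul_eq_one_iff_eq_one_or_neg_one.mp h' with ⟨rfl, hd⟩ | ⟨rfl, hd⟩
      · have hd1 : d = -1 := by omega
        subst hd1
        have e : ((1:ℤ):ℝ) * x + (b:ℝ) = -(-x + ((-b:ℤ):ℝ)) := by push_cast; ring
        rw [show ((0:ℤ):ℝ) * x + ((-1:ℤ):ℝ) = -1 by push_cast; ring, div_neg, div_one, e, neg_neg]
        exact ct_trans (ct_neg hx) (ct_add_int (-x) (-b))
      · have hd1 : d = 1 := by omega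
        subst hd1
        have e : (((-1:ℤ)):ℝ) * x + (b:ℝ) = -x + (b:ℝ) := by push_cast; ring
        rw [show ((0:ℤ):ℝ) * x + ((1:ℤ):ℝ) = 1 by push_cast; ring, div_one, e]
        exact ct_trans (ct_neg hx) (ct_add_int (-x) b)
lemma ct_mobius_aux : ∀ (N : ℕ) (a b c d : ℤ), c.natAbs ≤ N →
    (a * d - b * c = 1 ∨ a * d - b * c = -1) → ∀ x : ℝ, Irrational x →
    CommonTails x (((a : ℝ) * x + b) / ((c : ℝ) * x + d)) := by
  intro N
  induction N with
  | zero =>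
    intro a b c d hc hdet x hx
    have hc0 : c = 0 := by omega
    subst hc0
    exact ct_mobius_c0 a b d hdet x hx
  | succ N IH =>
    intro a b c d hc hdet x hx
    rcases eq_or_ne c 0 with rfl | hc0
    · exact ct_mobius_c0 a b d hdet x hx
    · set Q : ℤ := a / c with hQ
      set R : ℤ := a % c with hR
      set e : ℤ := b - Q * d with he
      have hA : a = c * Q + R := by rw [hQ, hR]; exact (Int.mul_ediv_add_emod a c).symm
      have hRlt : R.natAbs ≤ N := by
        have h1 : a % c < |c| := Int.emod_lt_abs a hc0
        have h2 : 0 ≤ a % c := Int.emod_nonneg a hc0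
        rw [Int.abs_eq_natAbs] at h1
        omega
      have hdet2 : c * e - d * R = 1 ∨ c * e - d * R = -1 := by
        have hee : c * e - d * R = -(a * d - b * c) := by rw [he]; linear_combination d * hA
        rcases hdet with h | h
        · right; omega
        · left; omega
      have hy := IH c d R e hRlt hdet2 x hx
      set y : ℝ := ((c : ℝ) * x + d) / ((R : ℝ) * x + e) with hydef
      have hyirr : Irrational y := mobius_irrational hx hdet2
      have h2 : CommonTails y y⁻¹ := ct_inv hyirr
      have h3 : CommonTails (y⁻¹) (y⁻¹ + Q) := ct_add_int _ Q
      have hd1 : (c : ℝ) * x + d ≠ 0 := by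
        apply linear_ne_zero hx; rintro ⟨h, _⟩; exact hc0 h
      have hd2 : (R : ℝ) * x + e ≠ 0 := by
        apply linear_ne_zero hx
        rintro ⟨h1, h2⟩
        rw [h1, h2] at hdet2
        simp at hdet2
      have key : ((a : ℝ) * x + b) / ((c : ℝ) * x + d) = y⁻¹ + Q := by
        have hAr : (a : ℝ) = c * Q + R := by exact_mod_cast hA
        have her : (e : ℝ) = b - Q * d := by push_cast [he]; ring
        rw [hydef, inv_div, div_add' _ _ _ hd1]
        congr 1
        linear_combination x * hAr - her
      rw [key]
      exact ct_trans hy (ct_trans h2 h3)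

lemma abs_sub_le_pow : ∀ (n : ℕ) (x y : ℝ), Irrational x → Irrational y →
    (∀ k, cfDigit x k = cfDigit y k) → |x - y| ≤ (1/4 : ℝ)^n := by
  intro n
  induction n with
  | zero =>
    intro x y hx hy h
    have h0 : ⌊x⌋ = ⌊y⌋ := h 0
    have h0' : ((⌊x⌋ : ℤ) : ℝ) = ((⌊y⌋ : ℤ) : ℝ) := by exact_mod_cast h0
    have h1 := Int.floor_le x
    have h2 := Int.lt_floor_add_one x
    have h3 := Int.floor_le y
    have h4 := Int.lt_floor_add_one y
    rw [pow_zero, abs_le]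
    constructor <;> linarith
  | succ n IH =>
    intro x y hx hy h
    set X1 := cfTerm x 1 with hX1
    set Y1 := cfTerm y 1 with hY1
    set X2 := cfTerm x 2 with hX2
    set Y2 := cfTerm y 2 with hY2
    have hX2irr : Irrational X2 := irrational_cfTerm hx 2
    have hY2irr : Irrational Y2 := irrational_cfTerm hy 2
    have hdig : ∀ k, cfDigit X2 k = cfDigit Y2 k := by
      intro k
      rw [hX2, hY2, ← cfDigit_shift, ← cfDigit_shift]
      exact h (2 + k)
    have IH2 := IH X2 Y2 hX2irr hY2irr hdig
    set a0 : ℤ := cfDigit x 0 with ha0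
    set a1 : ℤ := cfDigit x 1 with ha1
    have hb0 : cfDigit y 0 = a0 := (h 0).symm
    have hb1 : cfDigit y 1 = a1 := (h 1).symm
    have hX1gt : 1 < X1 := one_lt_cfTerm hx 0
    have hY1gt : 1 < Y1 := one_lt_cfTerm hy 0
    have hX2gt : 1 < X2 := one_lt_cfTerm hx 1
    have hY2gt : 1 < Y2 := one_lt_cfTerm hy 1
    have ha1ge : 1 ≤ a1 := one_le_cfDigit hx 0
    have ha1ge' : (1:ℝ) ≤ (a1 : ℝ) := by exact_mod_cast ha1ge
    -- basic identities
    have hfx : x - (a0 : ℝ) ≠ 0 := by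
      have := irrational_cfTerm hx 0
      exact sub_ne_zero.mpr (this.ne_int a0)
    have hfy : y - (a0 : ℝ) ≠ 0 := by
      have := irrational_cfTerm hy 0
      have h' := this.ne_int a0
      exact sub_ne_zero.mpr h'
    have hX1e : X1 = (x - (a0:ℝ))⁻¹ := rfl
    have hY1e : Y1 = (y - (a0:ℝ))⁻¹ := by
      rw [hY1]
      show (y - (⌊cfTerm y 0⌋ : ℝ))⁻¹ = (y - (a0:ℝ))⁻¹
      rw [show (⌊cfTerm y 0⌋ : ℤ) = a0 from hb0]
    have hfX1 : X1 - (a1 : ℝ) ≠ 0 := by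
      have := irrational_cfTerm hx 1
      exact sub_ne_zero.mpr (this.ne_int a1)
    have hfY1 : Y1 - (a1 : ℝ) ≠ 0 := by
      have := irrational_cfTerm hy 1
      exact sub_ne_zero.mpr (this.ne_int a1)
    have hX2e : X2 = (X1 - (a1:ℝ))⁻¹ := rfl
    have hY2e : Y2 = (Y1 - (a1:ℝ))⁻¹ := by
      rw [hY2]
      show (Y1 - (⌊cfTerm y 1⌋ : ℝ))⁻¹ = (Y1 - (a1:ℝ))⁻¹
      rw [show (⌊cfTerm y 1⌋ : ℤ) = a1 from hb1]
    have hex : x = (a0 : ℝ) + ((a1:ℝ) + X2⁻¹)⁻¹ := by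
      rw [hX2e, inv_inv, show (a1:ℝ) + (X1 - (a1:ℝ)) = X1 from by ring, hX1e, inv_inv]
      ring
    have hey : y = (a0 : ℝ) + ((a1:ℝ) + Y2⁻¹)⁻¹ := by
      rw [hY2e, inv_inv, show (a1:ℝ) + (Y1 - (a1:ℝ)) = Y1 from by ring, hY1e, inv_inv]
      ring
    have hX2pos : (0:ℝ) < X2 := by linarith
    have hY2pos : (0:ℝ) < Y2 := by linarith
    have hdX : (0:ℝ) < (a1:ℝ) * X2 + 1 := by nlinarith
    have hdY : (0:ℝ) < (a1:ℝ) * Y2 + 1 := by nlinarith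
    have hdX2 : (2:ℝ) < (a1:ℝ) * X2 + 1 := by nlinarith
    have hdY2 : (2:ℝ) < (a1:ℝ) * Y2 + 1 := by nlinarith
    have key : x - y = (X2 - Y2) / (((a1:ℝ) * X2 + 1) * ((a1:ℝ) * Y2 + 1)) := by
      rw [hex, hey]
      have hX2ne : X2 ≠ 0 := ne_of_gt hX2pos
      have hY2ne : Y2 ≠ 0 := ne_of_gt hY2pos
      have hiX : (a1:ℝ) + X2⁻¹ ≠ 0 := by
        have : (0:ℝ) < (a1:ℝ) + X2⁻¹ := by positivity
        linarith
      have hiY : (a1:ℝ) + Y2⁻¹ ≠ 0 := by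
        have : (0:ℝ) < (a1:ℝ) + Y2⁻¹ := by positivity
        linarith
      field_simp
      ring
    have habs : |x - y| = |X2 - Y2| / (((a1:ℝ) * X2 + 1) * ((a1:ℝ) * Y2 + 1)) := by
      rw [key, abs_div, abs_of_pos (mul_pos hdX hdY)]
    have hb1' : |X2 - Y2| ≤ (1/4:ℝ)^n := IH2
    have h4le : (4:ℝ) ≤ ((a1:ℝ) * X2 + 1) * ((a1:ℝ) * Y2 + 1) := by nlinarith
    rw [habs, pow_succ]
    rw [div_le_iff₀ (by positivity)]
    have habsnn : (0:ℝ) ≤ |X2 - Y2| := abs_nonneg _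
    nlinarith [hb1', h4le, habsnn, pow_nonneg (by norm_num : (0:ℝ) ≤ 1/4) n]
  
lemma eq_of_digits {x y : ℝ} (hx : Irrational x) (hy : Irrational y)
    (h : ∀ k, cfDigit x k = cfDigit y k) : x = y := by
  by_contra hne
  have hpos : 0 < |x - y| := abs_pos.mpr (sub_ne_zero.mpr hne)
  obtain ⟨n, hn⟩ := exists_pow_lt_of_lt_one hpos (by norm_num : (1/4 : ℝ) < 1)
  exact absurd (abs_sub_le_pow n x y hx hy h) (not_le.mpr hn)

lemma exists_mobius_cfTerm {x : ℝ} (hx : Irrational x) (m : ℕ) :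
    ∃ a b c d : ℤ, (a * d - b * c = 1 ∨ a * d - b * c = -1) ∧ ¬(c = 0 ∧ d = 0) ∧
      x = ((a : ℝ) * cfTerm x m + b) / ((c : ℝ) * cfTerm x m + d) := by
  induction m with
  | zero =>
    refine ⟨1, 0, 0, 1, by norm_num, by norm_num, ?_⟩
    rw [cfTerm_zero]
    norm_num
  | succ m ih =>
    obtain ⟨a, b, c, d, hdet, hcd, hxe⟩ := ih
    set T := cfTerm x m with hT
    set T' := cfTerm x (m+1) with hT'
    set e : ℤ := cfDigit x m with hedef
    have hTirr : Irrational T := irrational_cfTerm hx m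
    have hT'irr : Irrational T' := irrational_cfTerm hx (m+1)
    have hfr : T - (e:ℝ) ≠ 0 := sub_ne_zero.mpr (hTirr.ne_int e)
    have hT'e : T' = (T - (e:ℝ))⁻¹ := rfl
    have hTeq : T = (e:ℝ) + T'⁻¹ := by rw [hT'e, inv_inv]; ring
    have hT'ne : T' ≠ 0 := hT'irr.ne_zero
    refine ⟨a * e + b, a, c * e + d, c, ?_, ?_, ?_⟩
    · have hh : (a*e+b)*c - a*(c*e+d) = -(a*d - b*c) := by ring
      rcases hdet with h | h
      · right; rw [hh, h]
      · left; rw [hh, h]; ring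
    · rintro ⟨h1, h2⟩
      rw [h2] at h1
      simp at h1
      exact hcd ⟨h2, h1⟩
    · have hden1 : (c:ℝ) * T + d ≠ 0 := linear_ne_zero hTirr c d hcd
      have hden2 : ((c*e+d : ℤ):ℝ) * T' + (c:ℝ) ≠ 0 := by
        have := linear_ne_zero hT'irr (c*e+d) c
        apply this
        rintro ⟨h1, h2⟩
        rw [h2] at h1
        simp at h1
        exact hcd ⟨h2, h1⟩
      rw [hxe, hTeq]
      rw [div_eq_div_iff (by rw [← hTeq]; exact hden1) hden2]
      push_cast
      field_simp
      ring

lemma ct_to_mobius {s t : ℝ} (hs : Irrational s) (ht : Irrational t) (h : CommonTails s t) :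
    ∃ a b c d : ℤ, (a * d - b * c = 1 ∨ a * d - b * c = -1) ∧
      t = ((a : ℝ) * s + b) / ((c : ℝ) * s + d) := by
  obtain ⟨m, n, hd⟩ := h
  have hV : cfTerm s m = cfTerm t n := by
    apply eq_of_digits (irrational_cfTerm hs m) (irrational_cfTerm ht n)
    intro k
    rw [← cfDigit_shift, ← cfDigit_shift]
    exact hd k
  obtain ⟨a1, b1, c1, d1, hdet1, hcd1, h1⟩ := exists_mobius_cfTerm hs m
  obtain ⟨a2, b2, c2, d2, hdet2, hcd2, h2⟩ := exists_mobius_cfTerm ht n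
  set V := cfTerm s m with hVdef
  rw [← hV] at h2
  have hVirr : Irrational V := irrational_cfTerm hs m
  have hden1 : (c1:ℝ) * V + d1 ≠ 0 := linear_ne_zero hVirr c1 d1 hcd1
  have hden2 : (c2:ℝ) * V + d2 ≠ 0 := linear_ne_zero hVirr c2 d2 hcd2
  have hdet1' : a1 * d1 - b1 * c1 ≠ 0 := by rcases hdet1 with h | h <;> omega
  have hs1 : -(c1:ℝ) * s + a1 ≠ 0 := by
    have := linear_ne_zero hs (-c1) a1
    push_cast at this
    apply this
    rintro ⟨hh1, hh2⟩
    have : c1 = 0 := by omega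
    apply hdet1'
    rw [this, hh2]
    ring
  have h1' : s * ((c1:ℝ) * V + d1) = (a1:ℝ) * V + b1 := by
    rw [h1]; exact div_mul_cancel₀ _ hden1
  have hV2' : V * (-(c1:ℝ) * s + a1) = (d1:ℝ) * s - b1 := by linear_combination -h1'
  have h2' : t * ((c2:ℝ) * V + d2) = (a2:ℝ) * V + b2 := by
    rw [h2]; exact div_mul_cancel₀ _ hden2
  refine ⟨a2*d1 - b2*c1, -(a2*b1) + b2*a1, c2*d1 - d2*c1, -(c2*b1) + d2*a1, ?_, ?_⟩
  · have hh : (a2*d1 - b2*c1) * (-(c2*b1) + d2*a1) - (-(a2*b1) + b2*a1) * (c2*d1 - d2*c1)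
        = (a1*d1 - b1*c1) * (a2*d2 - b2*c2) := by ring
    rcases hdet1 with e1 | e1 <;> rcases hdet2 with e2 | e2 <;>
      rw [hh, e1, e2] <;> norm_num
  · have hdenC : ((c2*d1 - d2*c1 : ℤ):ℝ) * s + ((-(c2*b1) + d2*a1 : ℤ):ℝ) ≠ 0 := by
      apply linear_ne_zero hs
      rintro ⟨hh1, hh2⟩
      have hdd : (a2*d1 - b2*c1) * (-(c2*b1) + d2*a1) - (-(a2*b1) + b2*a1) * (c2*d1 - d2*c1)
          = (a1*d1 - b1*c1) * (a2*d2 - b2*c2) := by ring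
      rw [hh1, hh2] at hdd
      simp at hdd
      rcases hdet1 with e1 | e1 <;> rcases hdet2 with e2 | e2 <;> rw [e1, e2] at hdd <;> omega
    rw [eq_div_iff hdenC]
    push_cast
    linear_combination (-(c1:ℝ) * s + (a1:ℝ)) * h2' - (t * (c2:ℝ) - (a2:ℝ)) * hV2'

lemma exists_int_scale (c' d' : ℚ) (hc : c' ≠ 0) :
    ∃ (c d : ℤ) (lam : ℚ), lam ≠ 0 ∧ Int.gcd c d = 1 ∧ (c:ℚ) = lam * c' ∧ (d:ℚ) = lam * d' := by
  have hcden0 : (c'.den : ℚ) ≠ 0 := by exact_mod_cast c'.den_ne_zero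
  have hdden0 : (d'.den : ℚ) ≠ 0 := by exact_mod_cast d'.den_ne_zero
  have hnum : ∀ t : ℚ, (t.num : ℚ) = t * t.den := by
    intro t
    have hd : (t.den : ℚ) ≠ 0 := by exact_mod_cast t.den_ne_zero
    calc (t.num : ℚ) = (t.num:ℚ)/t.den * t.den := by field_simp
    _ = t * t.den := by rw [Rat.num_div_den t]
  set c0 : ℤ := c'.num * (d'.den : ℤ) with hc0def
  set d0 : ℤ := d'.num * (c'.den : ℤ) with hd0def
  have hc00 : c0 ≠ 0 := by
    apply mul_ne_zero (Rat.num_ne_zero.mpr hc)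
    exact_mod_cast d'.den_ne_zero
  set g : ℕ := Int.gcd c0 d0 with hgdef
  have hg0 : 0 < g := Int.gcd_pos_iff.mpr (Or.inl hc00)
  have hgz : (g:ℤ) ≠ 0 := by exact_mod_cast hg0.ne'
  have hgq : ((g:ℕ):ℚ) ≠ 0 := by exact_mod_cast hg0.ne'
  obtain ⟨c, hcEq⟩ : ((g:ℤ) ∣ c0) := Int.gcd_dvd_left _ _
  obtain ⟨d, hdEq⟩ : ((g:ℤ) ∣ d0) := Int.gcd_dvd_right _ _
  refine ⟨c, d, ((c'.den : ℚ) * (d'.den : ℚ)) / ((g:ℕ):ℚ), ?_, ?_, ?_, ?_⟩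
  · exact div_ne_zero (mul_ne_zero hcden0 hdden0) hgq
  · have h1 : c = c0 / (g:ℤ) := by rw [hcEq, Int.mul_ediv_cancel_left _ hgz]
    have h2 : d = d0 / (g:ℤ) := by rw [hdEq, Int.mul_ediv_cancel_left _ hgz]
    rw [h1, h2, hgdef]
    exact Int.gcd_div_gcd_div_gcd hg0
  · have e1 : ((c0:ℤ):ℚ) = (c'.den : ℚ) * (d'.den:ℚ) * c' := by
      rw [hc0def]; push_cast; rw [hnum c']; ring
    have e2 : ((c0:ℤ):ℚ) = ((g:ℕ):ℚ) * (c:ℚ) := by rw [hcEq]; push_cast; ring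
    field_simp
    linear_combination e1 - e2
  · have e1 : ((d0:ℤ):ℚ) = (d'.den : ℚ) * (c'.den:ℚ) * d' := by
      rw [hd0def]; push_cast; rw [hnum d']; ring
    have e2 : ((d0:ℤ):ℚ) = ((g:ℕ):ℚ) * (d:ℚ) := by rw [hdEq]; push_cast; ring
    field_simp
    linear_combination e1 - e2

end CFAux

open CFAux Polynomial

/-- For `r` a real root of an irreducible cubic over ℚ, the set
`{μr + ν : μ, ν ∈ ℚ, 0 < μ, 0 ≤ ν < 1}` is a complete set of representatives of the
common-tails equivalence classes of irrational elements of `ℚ(r)`: every irrational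
element of `ℚ(r)` has common tails with exactly one element of this set. -/
theorem roots_common_tails_stmt_9 (q : Polynomial ℚ) (hirr : Irreducible q)
    (hdeg : q.degree = 3) (r : ℝ) (hroot : Polynomial.aeval r q = 0)
    (s : ℝ) (hs : s ∈ IntermediateField.adjoin ℚ ({r} : Set ℝ)) (hs_irr : Irrational s) :
    ∃! u : ℝ,
      (∃ μ ν : ℚ, 0 < μ ∧ 0 ≤ ν ∧ ν < 1 ∧ u = (μ : ℝ) * r + (ν : ℝ)) ∧ CommonTails s u := by
  classical
  have hq0 : q ≠ 0 := fun h => by simp [h] at hdeg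
  have hint : IsIntegral ℚ r := isAlgebraic_iff_isIntegral.mp ⟨q, hq0, hroot⟩
  have hmono : (minpoly ℚ r).Monic := minpoly.monic hint
  have hdvd : minpoly ℚ r ∣ q := minpoly.dvd ℚ r hroot
  obtain ⟨k, hk⟩ := hdvd
  have hku : IsUnit k := by
    rcases hirr.isUnit_or_isUnit hk with h | h
    · exact absurd h (minpoly.not_isUnit ℚ r)
    · exact h
  have hdeg3 : (minpoly ℚ r).degree = 3 := by
    have h1 : q.degree = (minpoly ℚ r).degree + k.degree := by rw [hk, Polynomial.degree_mul]
    rw [Polynomial.degree_eq_zero_of_isUnit hku, add_zero] at h1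
    rw [← h1, hdeg]
  have hnd3 : (minpoly ℚ r).natDegree = 3 := Polynomial.natDegree_eq_of_degree_eq_some hdeg3
  -- linear independence of 1, r, r² over ℚ
  have indep : ∀ x y z : ℚ, (x:ℝ) * r^2 + (y:ℝ) * r + (z:ℝ) = 0 → x = 0 ∧ y = 0 ∧ z = 0 := by
    intro x y z hxyz
    by_contra hne
    have hp0 : (C x * X^2 + C y * X + C z : Polynomial ℚ) ≠ 0 := by
      intro hp
      apply hne
      have h2 := congrArg (fun p => Polynomial.coeff p 2) hp
      have h1 := congrArg (fun p => Polynomial.coeff p 1) hp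
      have h0 := congrArg (fun p => Polynomial.coeff p 0) hp
      simp [Polynomial.coeff_add, Polynomial.coeff_C, Polynomial.coeff_C_mul] at h0 h1 h2
      exact ⟨h2, h1, h0⟩
    have hpe : Polynomial.aeval r (C x * X^2 + C y * X + C z : Polynomial ℚ) = 0 := by
      simp only [map_add, map_mul, map_pow, Polynomial.aeval_C, Polynomial.aeval_X]
      rw [eq_ratCast (algebraMap ℚ ℝ) x, eq_ratCast (algebraMap ℚ ℝ) y,
        eq_ratCast (algebraMap ℚ ℝ) z]
      exact hxyz
    have hle := minpoly.degree_le_of_ne_zero ℚ r hp0 hpe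
    rw [hdeg3] at hle
    have hq2 := Polynomial.degree_quadratic_le (R := ℚ) (a := x) (b := y) (c := z)
    have h32 : (3 : WithBot ℕ) ≤ 2 := le_trans hle hq2
    norm_num at h32
  have hr_irr : Irrational r := by
    rintro ⟨ρ, hρ⟩
    have h := indep 0 1 (-ρ) (by push_cast; rw [hρ]; ring)
    exact one_ne_zero h.2.1
  -- the cubic relation r³ = AA r² + BB r + CC
  set m : Polynomial ℚ := minpoly ℚ r with hm
  set AA : ℚ := -(m.coeff 2) with hAA
  set BB : ℚ := -(m.coeff 1) with hBB
  set CC : ℚ := -(m.coeff 0) with hCC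
  have hcube : r^3 = (AA:ℝ) * r^2 + (BB:ℝ) * r + (CC:ℝ) := by
    have h0 : Polynomial.aeval r m = 0 := minpoly.aeval ℚ r
    rw [Polynomial.aeval_eq_sum_range' (n := 4) (by omega : m.natDegree < 4)] at h0
    have hc3 : m.coeff 3 = 1 := by
      have hco := hmono.coeff_natDegree
      rwa [hnd3] at hco
    simp only [Finset.sum_range_succ, Finset.sum_range_zero, hc3, Rat.smul_def] at h0
    rw [hAA, hBB, hCC]
    push_cast
    push_cast at h0
    nlinarith [h0]
  -- coordinates with respect to 1, r, r²
  have coords : ∀ w : ℝ, w ∈ IntermediateField.adjoin ℚ ({r} : Set ℝ) →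
      ∃ x y z : ℚ, w = (x:ℝ) * r^2 + (y:ℝ) * r + (z:ℝ) := by
    intro w hw
    have h1 : w ∈ Algebra.adjoin ℚ ({r} : Set ℝ) := by
      have he := IntermediateField.adjoin_simple_toSubalgebra_of_isAlgebraic (F := ℚ) (α := r) hint.isAlgebraic
      rw [← he]
      exact hw
    rw [Algebra.adjoin_singleton_eq_range_aeval] at h1
    obtain ⟨f, hf⟩ := h1
    set g := f %ₘ m with hgdef
    have hge : Polynomial.aeval r g = w := by
      have hsplit := Polynomial.modByMonic_add_div f m
      have h2 : Polynomial.aeval r (f %ₘ m + m * (f /ₘ m)) = Polynomial.aeval r f := by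
        rw [hsplit]
      rw [map_add, map_mul] at h2
      rw [show Polynomial.aeval r m = 0 from minpoly.aeval ℚ r, zero_mul, add_zero] at h2
      rw [← hgdef] at h2
      rw [h2]
      exact hf
    have hdg : g.natDegree < 3 := by
      rcases eq_or_ne g 0 with h0 | h0
      · rw [h0]; simp
      · have hlt := Polynomial.degree_modByMonic_lt f hmono
        rw [← hgdef] at hlt
        rw [Polynomial.natDegree_lt_iff_degree_lt h0]
        rw [hdeg3] at hlt
        exact_mod_cast hlt
    refine ⟨g.coeff 2, g.coeff 1, g.coeff 0, ?_⟩
    rw [← hge, Polynomial.aeval_eq_sum_range' (n := 3) hdg]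
    simp only [Finset.sum_range_succ, Finset.sum_range_zero, Rat.smul_def]
    push_cast
    ring
  -- Möbius wrapper
  have ct_mob : ∀ (a b c d : ℤ), (a*d - b*c = 1 ∨ a*d - b*c = -1) → ∀ x : ℝ, Irrational x →
      CommonTails x (((a:ℝ)*x + b)/((c:ℝ)*x + d)) := fun a b c d hdet x hx =>
    CFAux.ct_mobius_aux c.natAbs a b c d le_rfl hdet x hx
  -- uniqueness of the representative
  have uniq : ∀ (μ1 ν1 μ2 ν2 : ℚ), 0 < μ1 → 0 ≤ ν1 → ν1 < 1 → 0 < μ2 → 0 ≤ ν2 → ν2 < 1 →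
      CommonTails ((μ1:ℝ)*r + (ν1:ℝ)) ((μ2:ℝ)*r + (ν2:ℝ)) →
      ((μ1:ℝ)*r + (ν1:ℝ)) = ((μ2:ℝ)*r + (ν2:ℝ)) := by
    intro μ1 ν1 μ2 ν2 hμ1 hν1a hν1b hμ2 hν2a hν2b hct
    have h1irr : Irrational ((μ1:ℝ)*r + (ν1:ℝ)) := (hr_irr.ratCast_mul hμ1.ne').add_ratCast ν1
    have h2irr : Irrational ((μ2:ℝ)*r + (ν2:ℝ)) := (hr_irr.ratCast_mul hμ2.ne').add_ratCast ν2
    obtain ⟨a, b, c, d, hdet, heq⟩ := CFAux.ct_to_mobius h1irr h2irr hct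
    have hdet' : a*d - b*c ≠ 0 := by rcases hdet with h|h <;> omega
    have hcd : ¬(c = 0 ∧ d = 0) := by rintro ⟨rfl, rfl⟩; simp at hdet'
    have hden := CFAux.linear_ne_zero h1irr c d hcd
    have heq' : ((μ2:ℝ)*r + (ν2:ℝ)) * ((c:ℝ) * ((μ1:ℝ)*r + (ν1:ℝ)) + d)
        = (a:ℝ) * ((μ1:ℝ)*r + (ν1:ℝ)) + b := by
      rw [heq]; exact div_mul_cancel₀ _ hden
    have hexp : ((c*μ1*μ2 : ℚ):ℝ) * r^2 + ((c*(μ1*ν2 + ν1*μ2) + d*μ2 - a*μ1 : ℚ):ℝ) * r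
        + ((c*ν1*ν2 + d*ν2 - a*ν1 - b : ℚ):ℝ) = 0 := by
      push_cast
      linear_combination heq'
    obtain ⟨E1, E2, E3⟩ := indep _ _ _ hexp
    have hc0 : c = 0 := by
      have hq : (c:ℚ) = 0 := by
        rcases mul_eq_zero.mp E1 with h | h
        · rcases mul_eq_zero.mp h with h' | h'
          · exact h'
          · exact absurd h' hμ1.ne'
        · exact absurd h hμ2.ne'
      exact_mod_cast hq
    subst hc0
    have had : a * d = 1 ∨ a * d = -1 := by
      rcases hdet with h|h
      · left; linear_combination h
      · right; linear_combination h
    have hbbound : ∀ t : ℚ, t = ((b:ℤ):ℚ) → -1 < t → t < 1 → b = 0 := by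
      intro t ht h1 h2
      rw [ht] at h1 h2
      have hb1 : (-1:ℤ) < b := by exact_mod_cast h1
      have hb2 : b < 1 := by exact_mod_cast h2
      omega
    rcases had with h | h
    · rcases Int.mul_eq_one_iff_eq_one_or_neg_one.mp h with ⟨rfl, rfl⟩ | ⟨rfl, rfl⟩
      · have hμ : μ2 = μ1 := by push_cast at E2; linarith
        have hb0 : b = 0 := by
          apply hbbound (ν2 - ν1) (by push_cast at E3 ⊢; linarith) (by linarith) (by linarith)
        have hν : ν2 = ν1 := by
          subst hb0; push_cast at E3; linarith
        rw [hμ, hν]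
      · have hμ : μ2 = μ1 := by push_cast at E2; linarith
        have hb0 : b = 0 := by
          apply hbbound (ν1 - ν2) (by push_cast at E3 ⊢; linarith) (by linarith) (by linarith)
        have hν : ν2 = ν1 := by
          subst hb0; push_cast at E3; linarith
        rw [hμ, hν]
    · have h' : a * (-d) = 1 := by linear_combination -h
      rcases Int.mul_eq_one_iff_eq_one_or_neg_one.mp h' with ⟨rfl, hd⟩ | ⟨rfl, hd⟩
      · have hd1 : d = -1 := by omega
        subst hd1
        exfalso
        push_cast at E2
        linarith
      · have hd1 : d = 1 := by omega
        subst hd1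
        exfalso
        push_cast at E2
        linarith
  -- existence: a representative with some nonzero slope
  obtain ⟨al, be, ga, hsabc⟩ := coords s hs
  have step1 : ∃ (μ1 ν1 : ℚ), μ1 ≠ 0 ∧ CommonTails s ((μ1:ℝ)*r + (ν1:ℝ)) := by
    rcases eq_or_ne al 0 with hal | hal
    · have hbe : be ≠ 0 := by
        rintro rfl
        apply hs_irr
        exact ⟨ga, by rw [hsabc, hal]; push_cast; ring⟩
      refine ⟨be, ga, hbe, ?_⟩
      have hse : s = (be:ℝ)*r + (ga:ℝ) := by rw [hsabc, hal]; push_cast; ring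
      rw [← hse]
      exact CFAux.ct_refl s
    · set p : ℚ := -(be + al * AA) with hpdef
      set qq : ℚ := al with hqqdef
      set PQ : ℝ := (p:ℝ) + (al:ℝ) * r with hPQdef
      have hqq0 : qq ≠ 0 := hal
      have hqqr : (al:ℝ) ≠ 0 := by exact_mod_cast hqq0
      have hPQ0 : PQ ≠ 0 := by
        rw [hPQdef]
        intro h0
        apply hr_irr
        refine ⟨-p/al, ?_⟩
        push_cast
        field_simp
        linarith
      set W : ℝ := PQ⁻¹ with hWdef
      have hW0 : W ≠ 0 := inv_ne_zero hPQ0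
      have hWpq : W * PQ = 1 := inv_mul_cancel₀ hPQ0
      set K := IntermediateField.adjoin ℚ ({r} : Set ℝ) with hKdef
      have hrK : r ∈ K := IntermediateField.mem_adjoin_simple_self ℚ r
      have hcast : ∀ t : ℚ, ((t:ℚ):ℝ) ∈ K := by
        intro t
        rw [← eq_ratCast (algebraMap ℚ ℝ) t]
        exact K.algebraMap_mem t
      have hPQK : PQ ∈ K := by
        rw [hPQdef]
        exact K.add_mem (hcast p) (K.mul_mem (hcast qq) hrK)
      have hWK : W ∈ K := by rw [hWdef]; exact K.inv_mem hPQK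
      obtain ⟨Xq, Yq, Zq, hW⟩ := coords W hWK
      have hWpq' : ((Xq:ℝ)*r^2 + (Yq:ℝ)*r + (Zq:ℝ)) * ((p:ℝ) + (al:ℝ) * r) = 1 := by
        rw [← hW, ← hPQdef]
        exact hWpq
      have hexp : ((al*Xq*AA + p*Xq + al*Yq : ℚ):ℝ)*r^2 + ((al*Xq*BB + p*Yq + al*Zq : ℚ):ℝ)*r
          + ((al*Xq*CC + p*Zq - 1 : ℚ):ℝ) = 0 := by
        push_cast
        linear_combination hWpq' - ((al:ℝ)*(Xq:ℝ)) * hcube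
      obtain ⟨E1, E2, E3⟩ := indep _ _ _ hexp
      have hbeX : be * Xq = al * Yq := by
        rw [hpdef] at E1
        linear_combination -E1
      have hX0 : Xq ≠ 0 := by
        rintro rfl
        have hY0 : Yq = 0 := by
          have hz : al * Yq = 0 := by linear_combination -hbeX
          exact (mul_eq_zero.mp hz).resolve_left hal
        have hWZ : W = (Zq:ℝ) := by rw [hW, hY0]; push_cast; ring
        have hZ0 : Zq ≠ 0 := by
          rintro rfl
          apply hW0
          rw [hWZ]; norm_num
        apply hr_irr
        refine ⟨(1/Zq - p)/qq, ?_⟩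
        have h1 : (Zq:ℝ) * ((p:ℝ) + (al:ℝ)*r) = 1 := by
          rw [← hWZ, ← hPQdef]; exact hWpq
        have hZr : (Zq:ℝ) ≠ 0 := by exact_mod_cast hZ0
        push_cast
        field_simp
        linear_combination -h1
      set c'' : ℚ := Xq with hc''def
      set d'' : ℚ := al * Zq - ga * Xq with hd''def
      have halW : (al:ℝ) * W = (c'':ℝ) * s + (d'':ℝ) := by
        rw [hW, hsabc, hc''def, hd''def]
        have hbeX' : (be:ℝ)*(Xq:ℝ) = (al:ℝ)*(Yq:ℝ) := by exact_mod_cast hbeX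
        push_cast
        linear_combination -r * hbeX'
      obtain ⟨cc, dd, lam, hlam0, hgcd, hccq, hddq⟩ := CFAux.exists_int_scale c'' d'' hX0
      have hbez : ∃ a b : ℤ, a * dd - b * cc = 1 := by
        have h := Int.gcd_eq_gcd_ab cc dd
        rw [hgcd] at h
        exact ⟨Int.gcdB cc dd, -Int.gcdA cc dd, by push_cast at h; linear_combination -h⟩
      obtain ⟨a, b, hab⟩ := hbez
      set LM : ℚ := lam * al with hLMdef
      have hLM0 : LM ≠ 0 := mul_ne_zero hlam0 hal
      have hLMr : (LM:ℝ) ≠ 0 := by exact_mod_cast hLM0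
      have F2 : (cc:ℝ)*s + (dd:ℝ) = (LM:ℝ) * W := by
        have h1 : (cc:ℝ) = (lam:ℝ)*(c'':ℝ) := by exact_mod_cast hccq
        have h2 : (dd:ℝ) = (lam:ℝ)*(d'':ℝ) := by exact_mod_cast hddq
        rw [h1, h2, hLMdef]
        push_cast
        linear_combination -(lam:ℝ) * halW
      have hden : (cc:ℝ)*s + (dd:ℝ) ≠ 0 := by
        rw [F2]; exact mul_ne_zero hLMr hW0
      set u1 : ℝ := ((a:ℝ)*s + b)/((cc:ℝ)*s + dd) with hu1def
      have F1 : u1 * ((cc:ℝ)*s + dd) = (a:ℝ)*s + b := by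
        rw [hu1def]; exact div_mul_cancel₀ _ hden
      have G1 : u1 * ((LM:ℝ) * (c'':ℝ)) = (a:ℝ)*(al:ℝ) + ((b:ℝ)*(c'':ℝ) - (a:ℝ)*(d'':ℝ)) * PQ := by
        linear_combination ((c'':ℝ)*PQ) * F1 - ((c'':ℝ)*PQ*u1) * F2
          + (((a:ℝ)*(al:ℝ)) - u1*(LM:ℝ)*(c'':ℝ)) * hWpq - ((a:ℝ)*PQ) * halW
      set DD : ℚ := LM * c'' with hDDdef
      have hDD0 : DD ≠ 0 := mul_ne_zero hLM0 hX0
      have hDDr : (DD:ℝ) ≠ 0 := by exact_mod_cast hDD0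
      set μ1 : ℚ := (b*c'' - a*d'')*al / DD with hμ1def
      set ν1 : ℚ := ((a*al : ℚ) + (b*c'' - a*d'')*p) / DD with hν1def
      have hμ10 : μ1 ≠ 0 := by
        rw [hμ1def]
        apply div_ne_zero _ hDD0
        apply mul_ne_zero _ hqq0
        intro h0
        have hrel : (b:ℚ)*(cc:ℚ) - (a:ℚ)*(dd:ℚ) = lam * ((b:ℚ)*c'' - (a:ℚ)*d'') := by
          rw [hccq, hddq]; ring
        rw [h0, mul_zero] at hrel
        have habq : (a:ℚ)*(dd:ℚ) - (b:ℚ)*(cc:ℚ) = 1 := by exact_mod_cast hab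
        linarith
      refine ⟨μ1, ν1, hμ10, ?_⟩
      have hu1eq : u1 = (μ1:ℝ)*r + (ν1:ℝ) := by
        have hDDe : (DD:ℝ) = (LM:ℝ)*(c'':ℝ) := by rw [hDDdef]; push_cast; ring
        rw [hμ1def, hν1def]
        push_cast
        rw [hPQdef] at G1
        field_simp
        rw [hDDe]
        linear_combination G1
      rw [← hu1eq, hu1def]
      exact ct_mob a b cc dd (Or.inl hab) s hs_irr
  obtain ⟨μ1, ν1, hμ1, hct1⟩ := step1
  have hu1irr : Irrational ((μ1:ℝ)*r + (ν1:ℝ)) := (hr_irr.ratCast_mul hμ1).add_ratCast ν1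
  have finisher : ∃ (μ ν : ℚ), 0 < μ ∧ 0 ≤ ν ∧ ν < 1 ∧ CommonTails s ((μ:ℝ)*r + (ν:ℝ)) := by
    rcases hμ1.lt_or_gt with hneg | hpos
    · refine ⟨-μ1, (⌈ν1⌉ : ℚ) - ν1, by linarith, ?_, ?_, ?_⟩
      · have hle := Int.le_ceil ν1
        push_cast
        push_cast at hle
        linarith
      · have hlt := Int.ceil_lt_add_one ν1
        push_cast
        push_cast at hlt
        linarith
      · have h1 : CommonTails ((μ1:ℝ)*r + (ν1:ℝ)) (-((μ1:ℝ)*r + (ν1:ℝ))) := CFAux.ct_neg hu1irr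
        have h2 := CFAux.ct_add_int (-((μ1:ℝ)*r + (ν1:ℝ))) ⌈ν1⌉
        have e : -((μ1:ℝ)*r + (ν1:ℝ)) + ((⌈ν1⌉:ℤ):ℝ) = ((-μ1 : ℚ):ℝ)*r + (((⌈ν1⌉:ℚ) - ν1 : ℚ):ℝ) := by
          push_cast; ring
        rw [e] at h2
        exact CFAux.ct_trans hct1 (CFAux.ct_trans h1 h2)
    · refine ⟨μ1, ν1 - (⌊ν1⌋ : ℚ), hpos, ?_, ?_, ?_⟩
      · have hle := Int.floor_le ν1
        push_cast
        push_cast at hle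
        linarith
      · have hlt := Int.lt_floor_add_one ν1
        push_cast
        push_cast at hlt
        linarith
      · have h2 := CFAux.ct_add_int ((μ1:ℝ)*r + (ν1:ℝ)) (-⌊ν1⌋)
        have e : ((μ1:ℝ)*r + (ν1:ℝ)) + ((-⌊ν1⌋:ℤ):ℝ) = (μ1:ℝ)*r + ((ν1 - (⌊ν1⌋:ℚ) : ℚ):ℝ) := by
          push_cast; ring
        rw [e] at h2
        exact CFAux.ct_trans hct1 h2
  obtain ⟨μ, ν, hμ, hν0, hν1, hctu⟩ := finisher
  refine ⟨(μ:ℝ)*r + (ν:ℝ), ⟨⟨μ, ν, hμ, hν0, hν1, rfl⟩, hctu⟩, ?_⟩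
  rintro v ⟨⟨μ', ν', hμ', hν'0, hν'1, rfl⟩, hctv⟩
  exact uniq μ' ν' μ ν hμ' hν'0 hν'1 hμ hν0 hν1 (CFAux.ct_trans (CFAux.ct_symm hctv) hctu)
end
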